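/- arXiv:1806.06799 — 3 statements merged into one kernel-verified Lean document; each statement's English description precedes it below -/
import Mathlib

section
/- Let r ≥ 2 be an integer and let K₁ : ℝ → ℝ be integrable with ∫ tʲ K₁(t) dt = 0 for every integer j with 1 ≤ j ≤ r − 1, and ∫ |t|^r |K₁(t)| dt < ∞. Let f : ℝ → ℝ be (r−1)-times differentiable with |f^{(r-1)}(x)| ≤ M for all x ∈ ℝ. Then for every b ∈ ℝ and every h > 0, |∫ t K₁(t) f(h t + b) dt| ≤ (M / (r−1)!) (∫ |t|^r |K₁(t)| dt) · h^{r-1}. -/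
/-!
Expand `f (h t + b)` in `t` to Taylor order `r - 2` around `b`. Against `t K₁(t)` every monomial
`tᵏ` of the Taylor polynomial produces the moment `∫ tᵏ⁺¹ K₁(t) dt`, which vanishes for
`k ≤ r - 2`, so only the Lagrange remainder, of size `M |h t|ʳ⁻¹ / (r - 1)!`, survives.
-/

open MeasureTheory Set Finset
open scoped Nat

theorem iteratedDerivWithin_uIcc_eq_iteratedDeriv {f : ℝ → ℝ} {n : ℕ} (hf : ContDiff ℝ n f)
    {x₀ x y : ℝ} (hx : x₀ ≠ x) (hy : y ∈ uIcc x₀ x) :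
    iteratedDerivWithin n f (uIcc x₀ x) y = iteratedDeriv n f y :=
  iteratedDerivWithin_eq_iteratedDeriv (uniqueDiffOn_uIcc hx) hf.contDiffAt hy

-- `taylor_mean_remainder_lagrange_iteratedDeriv` would require `iteratedDeriv (n + 1) f` continuous.
theorem abs_sub_taylor_le {f : ℝ → ℝ} {n : ℕ} {M : ℝ}
    (hf : ∀ i ≤ n, Differentiable ℝ (iteratedDeriv i f))
    (hM : ∀ x, |iteratedDeriv (n + 1) f x| ≤ M) (x₀ x : ℝ) :
    |f x - ∑ k ∈ range (n + 1), iteratedDeriv k f x₀ / k ! * (x - x₀) ^ k| ≤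
      M / (n + 1)! * |x - x₀| ^ (n + 1) := by
  rcases eq_or_ne x₀ x with rfl | hx
  · simp [sum_range_succ']
  have hC : ContDiff ℝ n f :=
    contDiff_of_differentiable_iteratedDeriv fun m hm => hf m (by exact_mod_cast hm)
  have heq : EqOn (iteratedDerivWithin n f (uIcc x₀ x)) (iteratedDeriv n f) (uIcc x₀ x) :=
    fun y hy => iteratedDerivWithin_uIcc_eq_iteratedDeriv hC hx hy
  obtain ⟨y, hy, hrem⟩ := taylor_mean_remainder_lagrange hx hC.contDiffOn
    (((hf n le_rfl).differentiableOn.congr heq).mono uIoo_subset_uIcc_self)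
  have hderiv : iteratedDerivWithin (n + 1) f (uIcc x₀ x) y = iteratedDeriv (n + 1) f y := by
    rw [iteratedDerivWithin_succ, iteratedDeriv_succ,
      derivWithin_congr heq (heq (uIoo_subset_uIcc_self hy)),
      derivWithin_of_mem_nhds (s := uIcc x₀ x) (Icc_mem_nhds hy.1 hy.2)]
  have htaylor : taylorWithinEval f n (uIcc x₀ x) x₀ x =
      ∑ k ∈ range (n + 1), iteratedDeriv k f x₀ / k ! * (x - x₀) ^ k := by
    rw [taylor_within_apply]
    refine sum_congr rfl fun k hk => ?_
    have hkn : k ≤ n := Nat.lt_succ_iff.1 (mem_range.1 hk)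
    rw [iteratedDerivWithin_uIcc_eq_iteratedDeriv (hC.of_le (by exact_mod_cast hkn)) hx
      left_mem_uIcc, smul_eq_mul]
    ring
  rw [← htaylor, hrem, hderiv, abs_div, abs_mul, abs_pow, Nat.abs_cast, div_mul_eq_mul_div]
  gcongr
  exact hM y

theorem pow_le_one_add_pow {R : Type*} [Semiring R] [LinearOrder R] [IsOrderedRing R] {a : R}
    (ha : 0 ≤ a) {j r : ℕ} (hjr : j ≤ r) : a ^ j ≤ 1 + a ^ r := by
  rcases le_total a 1 with ha1 | ha1
  · exact (pow_le_one₀ ha ha1).trans (le_add_of_nonneg_right (pow_nonneg ha r))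
  · exact (pow_le_pow_right₀ ha1 hjr).trans (le_add_of_nonneg_left zero_le_one)

theorem integrable_pow_mul_of_integrable_abs_pow_mul {K : ℝ → ℝ} {r j : ℕ} (hK : Integrable K)
    (hKr : Integrable fun t => |t| ^ r * |K t|) (hjr : j ≤ r) :
    Integrable fun t => t ^ j * K t := by
  refine (hK.abs.add hKr).mono ((continuous_pow j).aestronglyMeasurable.mul hK.1) ?_
  filter_upwards with t
  have hbound : |t| ^ j * |K t| ≤ |K t| + |t| ^ r * |K t| := by
    nlinarith [pow_le_one_add_pow (abs_nonneg t) hjr, abs_nonneg (K t)]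
  simpa [abs_mul, abs_pow, abs_of_nonneg (by positivity : 0 ≤ |K t| + |t| ^ r * |K t|)]
    using hbound

theorem integral_mul_mul_sum_eq_zero {K : ℝ → ℝ} {n : ℕ}
    (hint : ∀ k ≤ n, Integrable fun t => t ^ (k + 1) * K t)
    (hmom : ∀ k ≤ n, ∫ t, t ^ (k + 1) * K t = 0) (a : ℕ → ℝ) :
    ∫ t, t * K t * ∑ k ∈ range (n + 1), a k * t ^ k = 0 := by
  have hterm : ∀ t, t * K t * ∑ k ∈ range (n + 1), a k * t ^ k =
      ∑ k ∈ range (n + 1), a k * (t ^ (k + 1) * K t) := fun t => by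
    rw [mul_sum]; exact sum_congr rfl fun k _ => by ring
  have hle : ∀ k ∈ range (n + 1), k ≤ n := fun k hk => Nat.lt_succ_iff.1 (mem_range.1 hk)
  simp_rw [hterm]
  rw [integral_finsetSum _ fun k hk => (hint k (hle k hk)).const_mul (a k)]
  exact sum_eq_zero fun k hk => by rw [integral_const_mul, hmom k (hle k hk), mul_zero]

theorem abs_integral_mul_mul_le_of_moments {K g : ℝ → ℝ} {n : ℕ} {C : ℝ} (hK : Integrable K)
    (hKn : Integrable fun t => |t| ^ (n + 2) * |K t|)
    (hmom : ∀ k ≤ n, ∫ t, t ^ (k + 1) * K t = 0) (hg : AEStronglyMeasurable g)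
    (a : ℕ → ℝ) (hgP : ∀ t, |g t - ∑ k ∈ range (n + 1), a k * t ^ k| ≤ C * |t| ^ (n + 1)) :
    |∫ t, t * K t * g t| ≤ C * ∫ t, |t| ^ (n + 2) * |K t| := by
  set P : ℝ → ℝ := fun t => ∑ k ∈ range (n + 1), a k * t ^ k
  have hint : ∀ k ≤ n, Integrable fun t => t ^ (k + 1) * K t := fun k hk =>
    integrable_pow_mul_of_integrable_abs_pow_mul hK hKn (by omega)
  have hpoly_int : Integrable fun t => t * K t * P t := by
    simp_rw [P, mul_sum]
    exact integrable_finsetSum _ fun k hk =>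
      ((hint k (Nat.lt_succ_iff.1 (mem_range.1 hk))).const_mul (a k)).congr
        (.of_forall fun t => by ring)
  have hrem_le : ∀ t, |t * K t * (g t - P t)| ≤ C * (|t| ^ (n + 2) * |K t|) := fun t => by
    rw [abs_mul, abs_mul]
    calc |t| * |K t| * |g t - P t| ≤ |t| * |K t| * (C * |t| ^ (n + 1)) := by
          gcongr; exact hgP t
      _ = C * (|t| ^ (n + 2) * |K t|) := by ring
  have hrem_int : Integrable fun t => t * K t * (g t - P t) :=
    (hKn.const_mul C).mono
      ((aestronglyMeasurable_id.mul hK.1).mul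
        (hg.sub (by fun_prop : Continuous P).aestronglyMeasurable))
      (.of_forall fun t => (hrem_le t).trans (le_abs_self _))
  have hsplit : ∫ t, t * K t * g t = ∫ t, t * K t * (g t - P t) := by
    rw [← add_zero (∫ t, t * K t * (g t - P t)), ← integral_mul_mul_sum_eq_zero hint hmom a,
      ← integral_add hrem_int hpoly_int]
    exact integral_congr_ae (.of_forall fun t => by simp only [P]; ring)
  rw [hsplit, ← integral_const_mul]
  exact norm_integral_le_of_norm_le (f := fun t => t * K t * (g t - P t)) (hKn.const_mul C)
    (.of_forall hrem_le)

/-- Kernel bias bound for the density term: if `K₁` has vanishing moments of orders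
`1, …, r − 1` and a finite absolute `r`-th moment, and `f` is `(r−1)`-times
differentiable with `(r−1)`-th derivative bounded by `M`, then for every `b` and `h > 0`,
`|∫ t K₁(t) f(ht + b) dt| ≤ (M / (r−1)!) (∫ |t|^r |K₁(t)| dt) h^{r−1}`. -/
theorem kernel_density_bias_bound
    (r : ℕ) (hr : 2 ≤ r) (K₁ : ℝ → ℝ) (hK₁ : Integrable K₁)
    (hmom : ∀ j : ℕ, 1 ≤ j → j ≤ r - 1 → ∫ t, t ^ j * K₁ t = 0)
    (hKr : Integrable (fun t => |t| ^ r * |K₁ t|))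
    (f : ℝ → ℝ) (M : ℝ)
    (hdiff : ∀ i < r - 1, Differentiable ℝ (iteratedDeriv i f))
    (hM : ∀ x, |iteratedDeriv (r - 1) f x| ≤ M) :
    ∀ b : ℝ, ∀ h : ℝ, 0 < h →
      |∫ t, t * K₁ t * f (h * t + b)| ≤
        (M / (r - 1).factorial) * (∫ t, |t| ^ r * |K₁ t|) * h ^ (r - 1) := by
  intro b h hh
  obtain ⟨n, rfl⟩ : ∃ n, r = n + 2 := ⟨r - 2, by omega⟩
  simp only [show n + 2 - 1 = n + 1 from rfl] at hmom hdiff hM ⊢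
  have hf : ∀ i ≤ n, Differentiable ℝ (iteratedDeriv i f) := fun i hi => hdiff i (by omega)
  have htaylor : ∀ t, |f (h * t + b) - ∑ k ∈ range (n + 1),
      (iteratedDeriv k f b / k ! * h ^ k) * t ^ k| ≤
        M / (n + 1)! * h ^ (n + 1) * |t| ^ (n + 1) := by
    intro t
    simpa only [add_sub_cancel_right, abs_mul, abs_of_pos hh, mul_pow, ← mul_assoc]
      using abs_sub_taylor_le hf hM b (h * t + b)
  have hcont : Continuous fun t => f (h * t + b) :=
    (by simpa using hf 0 (Nat.zero_le n) : Differentiable ℝ f).continuous.comp (by fun_prop)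
  calc |∫ t, t * K₁ t * f (h * t + b)|
      ≤ M / (n + 1)! * h ^ (n + 1) * ∫ t, |t| ^ (n + 2) * |K₁ t| :=
        abs_integral_mul_mul_le_of_moments hK₁ hKr
          (fun k hk => hmom (k + 1) (by omega) (by omega)) hcont.aestronglyMeasurable _ htaylor
    _ = M / (n + 1)! * (∫ t, |t| ^ (n + 2) * |K₁ t|) * h ^ (n + 1) := by ring
end

section
/- Let E = EuclideanSpace ℝ (Fin p), let β₀ ∈ E, d > 0, c₀ > 0, and let μ : E → E be differentiable on the closed ball B̄(β₀, d) with ⟪(fderiv ℝ μ x) u, u⟫ ≥ c₀ ‖u‖² for every x ∈ B̄(β₀, d) and every u ∈ E. Assume additionally that for every u ∈ E with ‖u‖ = 1, the function t ↦ ⟪μ(β₀ + t • u), u⟫ is monotone nondecreasing on [0, ∞). Then for every b ∈ E with ‖b − β₀‖ ≥ d, ‖μ(b) − μ(β₀)‖ ≥ c₀ d. -/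
open Metric RealInnerProductSpace

/-!
Write `b = β₀ + T u` with `‖u‖ = 1` and `T ≥ d`. Integrating the lower bound on
`⟪Dμ · u, u⟫` along the radius from `β₀` to `β₀ + d u` (a segment inside the ball) gives
`⟪μ (β₀ + d u) - μ β₀, u⟫ ≥ c₀ d`; monotonicity along the ray carries this out to `b`, and
Cauchy–Schwarz turns it into the norm bound.
-/

section

variable {E : Type*} [NormedAddCommGroup E] [InnerProductSpace ℝ E]

theorem hasDerivAt_inner_apply_add_smul {μ : E → E} {x v : E} {t : ℝ}
    (hμ : DifferentiableAt ℝ μ (x + t • v)) :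
    HasDerivAt (fun s : ℝ => ⟪μ (x + s • v), v⟫) ⟪fderiv ℝ μ (x + t • v) v, v⟫ t := by
  have hline : HasDerivAt (fun s : ℝ => x + s • v) v t := by
    simpa using ((hasDerivAt_id t).smul_const v).const_add x
  simpa using (hμ.hasFDerivAt.comp_hasDerivAt t hline).inner ℝ (hasDerivAt_const t v)

theorem mul_norm_sq_le_inner_sub_of_le_inner_fderiv {μ : E → E} {x y : E} {c : ℝ}
    (hdiff : ∀ z ∈ segment ℝ x y, DifferentiableAt ℝ μ z)
    (hlb : ∀ z ∈ segment ℝ x y, c * ‖y - x‖ ^ 2 ≤ ⟪fderiv ℝ μ z (y - x), y - x⟫) :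
    c * ‖y - x‖ ^ 2 ≤ ⟪μ y - μ x, y - x⟫ := by
  have hseg : ∀ t ∈ Set.Icc (0 : ℝ) 1, x + t • (y - x) ∈ segment ℝ x y := fun t ht => by
    rw [segment_eq_image']; exact ⟨t, ht, rfl⟩
  have hderiv : ∀ t ∈ Set.Icc (0 : ℝ) 1, HasDerivAt (fun s : ℝ => ⟪μ (x + s • (y - x)), y - x⟫)
      ⟪fderiv ℝ μ (x + t • (y - x)) (y - x), y - x⟫ t := fun t ht =>
    hasDerivAt_inner_apply_add_smul (hdiff _ (hseg t ht))
  have hmvt := (convex_Icc (0 : ℝ) 1).mul_sub_le_image_sub_of_le_deriv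
    (fun t ht => (hderiv t ht).continuousAt.continuousWithinAt)
    (fun t ht => (hderiv t (interior_subset ht)).differentiableAt.differentiableWithinAt)
    (fun t ht => (hderiv t (interior_subset ht)).deriv ▸ hlb _ (hseg t (interior_subset ht)))
    0 (by simp) 1 (by simp) zero_le_one
  simpa [inner_sub_left] using hmvt

end

theorem separation_outside_ball_general
    {p : ℕ} (β₀ : EuclideanSpace ℝ (Fin p)) (d c₀ : ℝ) (hd : 0 < d)
    (μ : EuclideanSpace ℝ (Fin p) → EuclideanSpace ℝ (Fin p))
    (hdiff : ∀ x ∈ closedBall β₀ d, DifferentiableAt ℝ μ x)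
    (hlb : ∀ x ∈ closedBall β₀ d, ∀ u : EuclideanSpace ℝ (Fin p),
      c₀ * ‖u‖ ^ 2 ≤ ⟪(fderiv ℝ μ x) u, u⟫)
    (hmono : ∀ u : EuclideanSpace ℝ (Fin p), ‖u‖ = 1 →
      MonotoneOn (fun t : ℝ => ⟪μ (β₀ + t • u), u⟫) (Set.Ici 0)) :
    ∀ b : EuclideanSpace ℝ (Fin p), d ≤ ‖b - β₀‖ → c₀ * d ≤ ‖μ b - μ β₀‖ := by
  intro b hb
  have hT : 0 < ‖b - β₀‖ := hd.trans_le hb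
  set u := ‖b - β₀‖⁻¹ • (b - β₀)
  have hu : ‖u‖ = 1 := norm_smul_inv_norm (norm_pos_iff.mp hT)
  have hb_eq : β₀ + ‖b - β₀‖ • u = b := by
    rw [smul_inv_smul₀ hT.ne', add_sub_cancel]
  have hy : β₀ + d • u ∈ closedBall β₀ d := by
    simp [norm_smul, hu, abs_of_pos hd]
  have hsub : segment ℝ β₀ (β₀ + d • u) ⊆ closedBall β₀ d :=
    (convex_closedBall β₀ d).segment_subset (mem_closedBall_self hd.le) hy
  have hinner : c₀ * d ≤ ⟪μ (β₀ + d • u) - μ β₀, u⟫ := by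
    have h := mul_norm_sq_le_inner_sub_of_le_inner_fderiv (fun z hz => hdiff z (hsub hz))
      (fun z hz => hlb z (hsub hz) _)
    simp only [add_sub_cancel_left, norm_smul, hu, Real.norm_of_nonneg hd.le, inner_smul_right] at h
    exact le_of_mul_le_mul_left (by linarith) hd
  calc c₀ * d ≤ ⟪μ (β₀ + d • u) - μ β₀, u⟫ := hinner
    _ ≤ ⟪μ b - μ β₀, u⟫ := by
      rw [inner_sub_left, inner_sub_left, ← hb_eq]
      gcongr ?_ - _
      exact hmono u hu (Set.mem_Ici.2 hd.le) (Set.mem_Ici.2 hT.le) hb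
    _ ≤ ‖μ b - μ β₀‖ := by simpa [hu] using real_inner_le_norm (μ b - μ β₀) u

/-- Separation bound outside the ball: if `μ` is differentiable on `B̄(β₀, d)` with
`⟪(fderiv ℝ μ x) u, u⟫ ≥ c₀ ‖u‖²` there, and `t ↦ ⟪μ(β₀ + t u), u⟫` is nondecreasing
on `[0, ∞)` for every unit vector `u`, then `‖μ(b) − μ(β₀)‖ ≥ c₀ d` for every `b`
with `‖b − β₀‖ ≥ d`. -/
theorem separation_outside_ball
    {p : ℕ} (β₀ : EuclideanSpace ℝ (Fin p)) (d c₀ : ℝ) (hd : 0 < d) (hc₀ : 0 < c₀)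
    (μ : EuclideanSpace ℝ (Fin p) → EuclideanSpace ℝ (Fin p))
    (hdiff : ∀ x ∈ closedBall β₀ d, DifferentiableAt ℝ μ x)
    (hlb : ∀ x ∈ closedBall β₀ d, ∀ u : EuclideanSpace ℝ (Fin p),
      c₀ * ‖u‖ ^ 2 ≤ ⟪(fderiv ℝ μ x) u, u⟫)
    (hmono : ∀ u : EuclideanSpace ℝ (Fin p), ‖u‖ = 1 →
      MonotoneOn (fun t : ℝ => ⟪μ (β₀ + t • u), u⟫) (Set.Ici 0)) :
    ∀ b : EuclideanSpace ℝ (Fin p), d ≤ ‖b - β₀‖ → c₀ * d ≤ ‖μ b - μ β₀‖ :=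
  separation_outside_ball_general β₀ d c₀ hd μ hdiff hlb hmono
end

section
/- Let E = EuclideanSpace ℝ (Fin p), let β₀ ∈ E, d > 0, c₀ > 0, and let μ : E → E be differentiable on the closed ball B̄(β₀, d) with ⟪(fderiv ℝ μ x) u, u⟫ ≥ c₀ ‖u‖² for every x ∈ B̄(β₀, d) and every u ∈ E, and such that for every u ∈ E with ‖u‖ = 1 the function t ↦ ⟪μ(β₀ + t • u), u⟫ is monotone nondecreasing on [0, ∞). Then every b ∈ E with ‖μ(b) − μ(β₀)‖ < c₀ d satisfies ‖b − β₀‖ < d, and moreover ‖b − β₀‖ ≤ c₀⁻¹ ‖μ(b) − μ(β₀)‖. -/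
open Metric RealInnerProductSpace

/-- Key segment inequality: strong monotonicity along a segment inside the ball. -/
theorem localization_key {p : ℕ} (β₀ : EuclideanSpace ℝ (Fin p)) (d c₀ : ℝ)
    (μ : EuclideanSpace ℝ (Fin p) → EuclideanSpace ℝ (Fin p))
    (hdiff : ∀ x ∈ closedBall β₀ d, DifferentiableAt ℝ μ x)
    (hlb : ∀ x ∈ closedBall β₀ d, ∀ u : EuclideanSpace ℝ (Fin p),
      c₀ * ‖u‖ ^ 2 ≤ ⟪(fderiv ℝ μ x) u, u⟫)
    (b : EuclideanSpace ℝ (Fin p)) (hb : ‖b - β₀‖ ≤ d) :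
    c₀ * ‖b - β₀‖ ^ 2 ≤ ⟪μ b - μ β₀, b - β₀⟫ := by
  set v := b - β₀ with hv
  have hmem : ∀ t ∈ Set.Icc (0:ℝ) 1, β₀ + t • v ∈ closedBall β₀ d := by
    intro t ht
    simp only [mem_closedBall, dist_eq_norm, add_sub_cancel_left, norm_smul, Real.norm_eq_abs]
    calc |t| * ‖v‖ ≤ 1 * ‖v‖ := by
          apply mul_le_mul_of_nonneg_right _ (norm_nonneg _)
          rw [abs_le]; exact ⟨le_trans (by norm_num) ht.1, ht.2⟩
      _ = ‖v‖ := one_mul _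
      _ ≤ d := hb
  set g : ℝ → ℝ := fun t => ⟪μ (β₀ + t • v), v⟫ with hg
  have hderivAt : ∀ t ∈ Set.Icc (0:ℝ) 1,
      HasDerivAt g ⟪(fderiv ℝ μ (β₀ + t • v)) v, v⟫ t := by
    intro t ht
    have hline : HasDerivAt (fun t : ℝ => β₀ + t • v) v t := by
      simpa using ((hasDerivAt_id t).smul_const v).const_add β₀
    have hμ := (hdiff _ (hmem t ht)).hasFDerivAt
    have hcomp := hμ.comp_hasDerivAt t hline
    have h2 : HasDerivAt (fun s : ℝ => ⟪v, μ (β₀ + s • v)⟫)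
        ⟪v, (fderiv ℝ μ (β₀ + t • v)) v⟫ t :=
      (innerSL ℝ v).hasFDerivAt.comp_hasDerivAt t hcomp
    have hgeq : g = fun s : ℝ => ⟪v, μ (β₀ + s • v)⟫ := funext fun s => real_inner_comm _ _
    rw [hgeq, real_inner_comm]
    exact h2
  have hcont : ContinuousOn g (Set.Icc 0 1) := fun t ht =>
    (hderivAt t ht).continuousAt.continuousWithinAt
  have hdiffg : DifferentiableOn ℝ g (interior (Set.Icc (0:ℝ) 1)) := by
    intro t ht
    rw [interior_Icc] at ht
    exact ((hderivAt t ⟨le_of_lt ht.1, le_of_lt ht.2⟩).differentiableAt).differentiableWithinAt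
  have hderiv_lb : ∀ t ∈ interior (Set.Icc (0:ℝ) 1), c₀ * ‖v‖ ^ 2 ≤ deriv g t := by
    intro t ht
    rw [interior_Icc] at ht
    have ht' : t ∈ Set.Icc (0:ℝ) 1 := ⟨le_of_lt ht.1, le_of_lt ht.2⟩
    rw [(hderivAt t ht').deriv]
    exact hlb _ (hmem t ht') v
  have := (convex_Icc (0:ℝ) 1).mul_sub_le_image_sub_of_le_deriv hcont hdiffg hderiv_lb
    0 (by norm_num) 1 (by norm_num) (by norm_num)
  have hg1 : g 1 = ⟪μ b, v⟫ := by simp [g, hv]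
  have hg0 : g 0 = ⟪μ β₀, v⟫ := by simp [g]
  rw [hg1, hg0] at this
  rw [inner_sub_left]
  linarith

/-- Localization: if `μ` is differentiable on `B̄(β₀, d)` with
`⟪(fderiv ℝ μ x) u, u⟫ ≥ c₀ ‖u‖²` there, and `t ↦ ⟪μ(β₀ + t u), u⟫` is nondecreasing
on `[0, ∞)` for every unit vector `u`, then every `b` with `‖μ(b) − μ(β₀)‖ < c₀ d`
satisfies `‖b − β₀‖ < d` and `‖b − β₀‖ ≤ c₀⁻¹ ‖μ(b) − μ(β₀)‖`. -/
theorem localization_from_small_estimating_function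
    {p : ℕ} (β₀ : EuclideanSpace ℝ (Fin p)) (d c₀ : ℝ) (hd : 0 < d) (hc₀ : 0 < c₀)
    (μ : EuclideanSpace ℝ (Fin p) → EuclideanSpace ℝ (Fin p))
    (hdiff : ∀ x ∈ closedBall β₀ d, DifferentiableAt ℝ μ x)
    (hlb : ∀ x ∈ closedBall β₀ d, ∀ u : EuclideanSpace ℝ (Fin p),
      c₀ * ‖u‖ ^ 2 ≤ ⟪(fderiv ℝ μ x) u, u⟫)
    (hmono : ∀ u : EuclideanSpace ℝ (Fin p), ‖u‖ = 1 →
      MonotoneOn (fun t : ℝ => ⟪μ (β₀ + t • u), u⟫) (Set.Ici 0)) :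
    ∀ b : EuclideanSpace ℝ (Fin p), ‖μ b - μ β₀‖ < c₀ * d →
      ‖b - β₀‖ < d ∧ ‖b - β₀‖ ≤ c₀⁻¹ * ‖μ b - μ β₀‖ := by
  intro b hsmall
  have hlt : ‖b - β₀‖ < d := by
    by_contra hge
    push_neg at hge  -- d ≤ ‖b - β₀‖
    have hvne : b - β₀ ≠ 0 := by
      intro h; rw [h, norm_zero] at hge; linarith
    have hnpos : 0 < ‖b - β₀‖ := norm_pos_iff.mpr hvne
    set u : EuclideanSpace ℝ (Fin p) := ‖b - β₀‖⁻¹ • (b - β₀) with hu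
    have hunorm : ‖u‖ = 1 := by
      rw [hu, norm_smul, norm_inv, norm_norm, inv_mul_cancel₀ (ne_of_gt hnpos)]
    -- b' := β₀ + d • u lies on the sphere of radius d
    have hb' : ‖(β₀ + d • u) - β₀‖ = d := by
      simp [norm_smul, hunorm, abs_of_pos hd]
    have hkey := localization_key β₀ d c₀ μ hdiff hlb (β₀ + d • u) (le_of_eq hb')
    have hsub : (β₀ + d • u) - β₀ = d • u := by abel
    rw [hsub] at hkey
    have hkey' : c₀ * d ≤ ⟪μ (β₀ + d • u) - μ β₀, u⟫ := by
      have hdu : ‖d • u‖ = d := by simp [norm_smul, hunorm, abs_of_pos hd]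
      rw [hdu] at hkey
      rw [real_inner_smul_right] at hkey
      nlinarith [hkey]
    -- monotonicity: value at ‖b-β₀‖ at least value at d
    have hm := hmono u hunorm (Set.mem_Ici.mpr (le_of_lt hd))
      (Set.mem_Ici.mpr (le_trans (le_of_lt hd) hge)) hge
    have hbeq : β₀ + ‖b - β₀‖ • u = b := by
      rw [hu, smul_smul, mul_inv_cancel₀ (ne_of_gt hnpos), one_smul]
      abel
    have hm' : ⟪μ (β₀ + d • u), u⟫ ≤ ⟪μ (β₀ + ‖b - β₀‖ • u), u⟫ := hm
    rw [hbeq] at hm'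
    have hfinal : c₀ * d ≤ ⟪μ b - μ β₀, u⟫ := by
      rw [inner_sub_left] at hkey' ⊢
      linarith [hm']
    have hcs : ⟪μ b - μ β₀, u⟫ ≤ ‖μ b - μ β₀‖ := by
      calc ⟪μ b - μ β₀, u⟫ ≤ ‖μ b - μ β₀‖ * ‖u‖ := real_inner_le_norm _ _
        _ = ‖μ b - μ β₀‖ := by rw [hunorm, mul_one]
    linarith
  refine ⟨hlt, ?_⟩
  have hkey := localization_key β₀ d c₀ μ hdiff hlb b (le_of_lt hlt)
  have hcs : ⟪μ b - μ β₀, b - β₀⟫ ≤ ‖μ b - μ β₀‖ * ‖b - β₀‖ := real_inner_le_norm _ _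
  rcases eq_or_ne (b - β₀) 0 with h0 | h0
  · rw [h0, norm_zero]
    positivity
  · have hnpos : 0 < ‖b - β₀‖ := norm_pos_iff.mpr h0
    rw [inv_mul_eq_div, le_div_iff₀ hc₀]
    nlinarith
end
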